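/- Let p : E → B and p' : E' → B be continuous maps over the same base and let f : B → C be a continuous map such that f(B) ⊆ C is a normal space in the subspace topology. Let p ×_B p' : E ×_B E' → B denote the fibrewise product, where E ×_B E' = {(e, e') ∈ E × E' : p(e) = p'(e')} with the subspace topology and (p ×_B p')(e, e') = p(e). Then (1) max{secat_f[p], secat_f[p']} ≤ secat_f[p ×_B p'] ≤ secat_f[p] + secat_f[p']; and (2) if p' admits a global continuous section, then secat_f[p ×_B p'] = secat_f[p]. -/

import Mathlib

/-- The relative sectional category `secat_f[p : E → B]` of `p : E → B` with respect to
`f : B → C`: the least `n` such that there are open sets `U_0, …, U_n ⊆ C` with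
`f(B) ⊆ U_0 ∪ ⋯ ∪ U_n` and `p` admitting a continuous section over each `f⁻¹(U_i)`. -/
noncomputable def secatf {E B C : Type*} [TopologicalSpace E] [TopologicalSpace B]
    [TopologicalSpace C] (p : C(E, B)) (f : C(B, C)) : ℕ∞ :=
  sInf {n : ℕ∞ | ∃ m : ℕ, n = m ∧ ∃ U : Fin (m + 1) → Set C,
    (∀ i, IsOpen (U i)) ∧ Set.range f ⊆ (⋃ i, U i) ∧
    ∀ i, ∃ s : C((⇑f ⁻¹' U i : Set B), E), ∀ x, p (s x) = (x : B)}

/-- The fibrewise product `E ×_B E' → B` of `p : E → B` and `p' : E' → B`. -/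
noncomputable def fibrewiseProd {E E' B : Type*} [TopologicalSpace E] [TopologicalSpace E']
    [TopologicalSpace B] (p : C(E, B)) (p' : C(E', B)) :
    C({q : E × E' // p q.1 = p' q.2}, B) :=
  ⟨fun q => p (q : E × E').1,
    p.continuous.comp (continuous_fst.comp continuous_subtype_val)⟩

/-!
A map `E₂ → E` over `B` turns sections of `E₂ → B` into sections of `E → B`. This gives the lower
bounds (via the two projections of `E ×_B E'`) and part (2) (via `e ↦ (e, s (p e))`).

For the upper bound, take partitions of unity `φ_i`, `ψ_j` on the normal space `f(B)` subordinate to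
the two covers and let `W_ij` be the set where `φ_i ψ_j > 0` strictly dominates every other product
`φ_a ψ_b` with `a + b = i + j`. These sets are open, and for fixed `k` those with `i + j = k` are
disjoint, so the sections of `p ×_B p'` over them glue. Every point lies in some `W_ij`: take `i`
and `j` to be the largest indices maximizing `φ_·` and `ψ_·` there.
-/

theorem exists_greatest_argmax {ι β : Type*} [Finite ι] [Nonempty ι] [LinearOrder ι]
    [LinearOrder β] (u : ι → β) : ∃ i, ∀ a, u a ≤ u i ∧ (i < a → u a < u i) := by
  obtain ⟨i, hi⟩ := Finite.exists_max fun a => toLex (u a, a)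
  refine ⟨i, fun a => ?_⟩
  rcases Prod.Lex.le_iff.mp (hi a) with h | ⟨h, h'⟩
  · exact ⟨h.le, fun _ => h⟩
  · exact ⟨h.le, fun ha => absurd h' (not_le.mpr ha)⟩

section StrictDiagMax

variable {n m : ℕ}

def IsStrictDiagMax (u : Fin n → ℝ) (v : Fin m → ℝ) (i : Fin n) (j : Fin m) : Prop :=
  0 < u i * v j ∧ ∀ (a : Fin n) (b : Fin m), (a : ℕ) + b = i + j → (a, b) ≠ (i, j) →
    u a * v b < u i * v j

theorem exists_isStrictDiagMax {u : Fin n → ℝ} {v : Fin m → ℝ} (hu₀ : ∀ a, 0 ≤ u a)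
    (hv₀ : ∀ b, 0 ≤ v b) (hu : ∃ a, 0 < u a) (hv : ∃ b, 0 < v b) :
    ∃ i j, IsStrictDiagMax u v i j := by
  have : Nonempty (Fin n) := hu.nonempty
  have : Nonempty (Fin m) := hv.nonempty
  obtain ⟨i, hi⟩ := exists_greatest_argmax u
  obtain ⟨j, hj⟩ := exists_greatest_argmax v
  have hui : 0 < u i := hu.elim fun a ha => ha.trans_le (hi a).1
  have hvj : 0 < v j := hv.elim fun b hb => hb.trans_le (hj b).1
  refine ⟨i, j, mul_pos hui hvj, fun a b hab hne => ?_⟩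
  rcases lt_trichotomy a i with hai | rfl | hia
  · have hjb : j < b := by rw [Fin.lt_def] at hai ⊢; omega
    calc u a * v b ≤ u i * v b := mul_le_mul_of_nonneg_right (hi a).1 (hv₀ b)
      _ < u i * v j := mul_lt_mul_of_pos_left ((hj b).2 hjb) hui
  · exact absurd (by rw [Fin.ext (by omega : (b : ℕ) = j)]) hne
  · calc u a * v b ≤ u a * v j := mul_le_mul_of_nonneg_left (hj b).1 (hu₀ a)
      _ < u i * v j := mul_lt_mul_of_pos_right ((hi a).2 hia) hvj

theorem IsStrictDiagMax.eq {u : Fin n → ℝ} {v : Fin m → ℝ} {i a : Fin n} {j b : Fin m}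
    (h : IsStrictDiagMax u v i j) (h' : IsStrictDiagMax u v a b) (hab : (a : ℕ) + b = i + j) :
    (a, b) = (i, j) := by
  by_contra hne
  exact (h.2 a b hab hne).not_gt (h'.2 i j hab.symm (Ne.symm hne))

theorem IsStrictDiagMax.pos {u : Fin n → ℝ} {v : Fin m → ℝ} {i : Fin n} {j : Fin m}
    (hu₀ : ∀ a, 0 ≤ u a) (h : IsStrictDiagMax u v i j) : 0 < u i ∧ 0 < v j := by
  have hui : 0 < u i := (hu₀ i).lt_of_ne fun h0 => by simpa [← h0] using h.1
  exact ⟨hui, pos_of_mul_pos_right h.1 hui.le⟩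

theorem isOpen_setOf_isStrictDiagMax {X : Type*} [TopologicalSpace X] (φ : Fin n → C(X, ℝ))
    (ψ : Fin m → C(X, ℝ)) (i : Fin n) (j : Fin m) :
    IsOpen {x | IsStrictDiagMax (φ · x) (ψ · x) i j} := by
  simp only [IsStrictDiagMax, Set.ofPred_and, Set.ofPred_forall]
  refine (isOpen_lt (by fun_prop) (by fun_prop)).inter
    (isOpen_iInter_of_finite fun a => isOpen_iInter_of_finite fun b =>
      isOpen_iInter_of_finite fun _ => isOpen_iInter_of_finite fun _ =>
        isOpen_lt (by fun_prop) (by fun_prop))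

end StrictDiagMax

theorem exists_diagonal_refinement {X : Type*} [TopologicalSpace X] [NormalSpace X] {n m : ℕ}
    {U : Fin n → Set X} {V : Fin m → Set X} (hUo : ∀ i, IsOpen (U i)) (hVo : ∀ j, IsOpen (V j))
    (hU : ⋃ i, U i = Set.univ) (hV : ⋃ j, V j = Set.univ) :
    ∃ W : Fin n × Fin m → Set X, (∀ ij, IsOpen (W ij)) ∧ (∀ ij, W ij ⊆ U ij.1 ∩ V ij.2) ∧
      (∀ ij ab, (ij.1 : ℕ) + ij.2 = ab.1 + ab.2 → ij ≠ ab → Disjoint (W ij) (W ab)) ∧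
      ⋃ ij, W ij = Set.univ := by
  obtain ⟨φ, hφ⟩ := PartitionOfUnity.exists_isSubordinate_of_locallyFinite isClosed_univ U hUo
    (locallyFinite_of_finite U) hU.ge
  obtain ⟨ψ, hψ⟩ := PartitionOfUnity.exists_isSubordinate_of_locallyFinite isClosed_univ V hVo
    (locallyFinite_of_finite V) hV.ge
  refine ⟨fun ij => {x | IsStrictDiagMax (φ · x) (ψ · x) ij.1 ij.2},
    fun ij => isOpen_setOf_isStrictDiagMax _ _ ij.1 ij.2, ?_, ?_, ?_⟩
  · intro ij x (hx : IsStrictDiagMax (φ · x) (ψ · x) ij.1 ij.2)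
    obtain ⟨hφx, hψx⟩ := hx.pos (φ.nonneg · x)
    exact ⟨hφ _ (subset_tsupport _ hφx.ne'), hψ _ (subset_tsupport _ hψx.ne')⟩
  · refine fun ij ab hsum hne => Set.disjoint_left.mpr ?_
    intro x (hij : IsStrictDiagMax (φ · x) (ψ · x) ij.1 ij.2)
      (hab : IsStrictDiagMax (φ · x) (ψ · x) ab.1 ab.2)
    exact hne (hab.eq hij hsum)
  · refine Set.iUnion_eq_univ_iff.mpr fun x => ?_
    obtain ⟨i, j, h⟩ := exists_isStrictDiagMax (φ.nonneg · x) (ψ.nonneg · x)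
      (φ.exists_pos (Set.mem_univ x)) (ψ.exists_pos (Set.mem_univ x))
    exact ⟨(i, j), h⟩

section Sections

variable {E E' B : Type*} [TopologicalSpace E] [TopologicalSpace E'] [TopologicalSpace B]

def HasSectionOn (p : C(E, B)) (s : Set B) : Prop :=
  ∃ σ : C(s, E), ∀ x, p (σ x) = x

theorem HasSectionOn.mono {p : C(E, B)} {s t : Set B} (h : HasSectionOn p s) (hts : t ⊆ s) :
    HasSectionOn p t :=
  h.elim fun σ hσ => ⟨σ.comp (.inclusion hts), fun _ => hσ _⟩

theorem HasSectionOn.of_comp {p : C(E, B)} {q : C(E', B)} (g : C(E', E))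
    (hg : ∀ e, p (g e) = q e) {s : Set B} (h : HasSectionOn q s) : HasSectionOn p s :=
  h.elim fun σ hσ => ⟨g.comp σ, fun x => (hg _).trans (hσ x)⟩

theorem hasSectionOn_fibrewiseProd {p : C(E, B)} {p' : C(E', B)} {s : Set B}
    (h : HasSectionOn p s) (h' : HasSectionOn p' s) : HasSectionOn (fibrewiseProd p p') s := by
  obtain ⟨σ, hσ⟩ := h
  obtain ⟨σ', hσ'⟩ := h'
  exact ⟨⟨fun x => ⟨(σ x, σ' x), (hσ x).trans (hσ' x).symm⟩, by fun_prop⟩, hσ⟩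

theorem hasSectionOn_iUnion {ι : Type*} {p : C(E, B)} {P : ι → Set B}
    (hPo : ∀ i, IsOpen (P i)) (hP : Pairwise fun i j => Disjoint (P i) (P j))
    (h : ∀ i, HasSectionOn p (P i)) :
    HasSectionOn p (⋃ i, P i) := by
  choose σ hσ using h
  let S : ι → Set (⋃ i, P i) := fun i => Subtype.val ⁻¹' P i
  let τ : ∀ i, C(S i, E) := fun i => (σ i).comp ⟨fun x => ⟨x.1.1, x.2⟩, by fun_prop⟩
  have hτ : ∀ i j (x : ⋃ i, P i) (hi : x ∈ S i) (hj : x ∈ S j), τ i ⟨x, hi⟩ = τ j ⟨x, hj⟩ := by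
    intro i j x hi hj
    obtain rfl : i = j := hP.eq (Set.not_disjoint_iff.mpr ⟨x, hi, hj⟩)
    rfl
  have hS : ∀ x, ∃ i, S i ∈ nhds x := fun x =>
    (Set.mem_iUnion.mp x.2).imp fun i hi => ((hPo i).preimage continuous_subtype_val).mem_nhds hi
  refine ⟨ContinuousMap.liftCover S τ hτ hS, fun x => ?_⟩
  obtain ⟨i, hi⟩ := Set.mem_iUnion.mp x.2
  rw [ContinuousMap.liftCover_coe (⟨x, hi⟩ : S i)]
  exact hσ i _

end Sections

theorem iUnion_preimage_val_eq_univ {α ι : Type*} {s : Set α} {U : ι → Set α}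
    (h : s ⊆ ⋃ i, U i) : ⋃ i, ((↑) ⁻¹' U i : Set s) = Set.univ := by
  rwa [← Set.preimage_iUnion, Set.preimage_eq_univ_iff, Subtype.range_coe]

section Secat

variable {E E' E₂ B C : Type*} [TopologicalSpace E] [TopologicalSpace E'] [TopologicalSpace E₂]
  [TopologicalSpace B] [TopologicalSpace C]

def SecatCover (p : C(E, B)) (f : C(B, C)) (m : ℕ) : Prop :=
  ∃ U : Fin (m + 1) → Set C, (∀ i, IsOpen (U i)) ∧ Set.range f ⊆ ⋃ i, U i ∧
    ∀ i, HasSectionOn p (f ⁻¹' U i)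

theorem secatf_eq_sInf (p : C(E, B)) (f : C(B, C)) :
    secatf p f = sInf {n : ℕ∞ | ∃ m : ℕ, n = m ∧ SecatCover p f m} :=
  rfl

theorem exists_secatCover_of_secatf_ne_top {p : C(E, B)} {f : C(B, C)} (h : secatf p f ≠ ⊤) :
    ∃ m : ℕ, secatf p f = m ∧ SecatCover p f m := by
  have hne : {n : ℕ∞ | ∃ m : ℕ, n = m ∧ SecatCover p f m}.Nonempty :=
    Set.nonempty_iff_ne_empty.mpr fun he => h (by rw [secatf_eq_sInf, he, sInf_empty])
  exact csInf_mem hne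

theorem secatf_le_of_comp {p : C(E, B)} {q : C(E₂, B)} (f : C(B, C)) (g : C(E₂, E))
    (hg : ∀ e, p (g e) = q e) : secatf p f ≤ secatf q f :=
  sInf_le_sInf fun _ ⟨m, hn, U, hUo, hUc, hUs⟩ =>
    ⟨m, hn, U, hUo, hUc, fun i => HasSectionOn.of_comp g hg (hUs i)⟩

theorem secatf_le_add {p : C(E, B)} {p' : C(E', B)} {q : C(E₂, B)} {f : C(B, C)}
    (h : ∀ n m, SecatCover p f n → SecatCover p' f m → SecatCover q f (n + m)) :
    secatf q f ≤ secatf p f + secatf p' f := by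
  rcases eq_or_ne (secatf p f) ⊤ with hp | hp
  · simp [hp]
  rcases eq_or_ne (secatf p' f) ⊤ with hp' | hp'
  · simp [hp']
  obtain ⟨n, hn, hcn⟩ := exists_secatCover_of_secatf_ne_top hp
  obtain ⟨m, hm, hcm⟩ := exists_secatCover_of_secatf_ne_top hp'
  rw [hn, hm, ← Nat.cast_add]
  exact sInf_le ⟨n + m, rfl, h n m hcn hcm⟩

theorem secatCover_fibrewiseProd {p : C(E, B)} {p' : C(E', B)} {f : C(B, C)}
    [NormalSpace (Set.range f)] {n m : ℕ} (h : SecatCover p f n) (h' : SecatCover p' f m) :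
    SecatCover (fibrewiseProd p p') f (n + m) := by
  obtain ⟨U, hUo, hUc, hUs⟩ := h
  obtain ⟨V, hVo, hVc, hVs⟩ := h'
  obtain ⟨W, hWo, hWUV, hWd, hWc⟩ := exists_diagonal_refinement
    (fun i => (hUo i).preimage continuous_subtype_val)
    (fun j => (hVo j).preimage continuous_subtype_val)
    (iUnion_preimage_val_eq_univ hUc) (iUnion_preimage_val_eq_univ hVc)
  choose O hOo hOW using fun ij => isOpen_induced_iff.mp (hWo ij)
  let g : B → Set.range f := Set.rangeFactorization f
  have hfO : ∀ ij, f ⁻¹' O ij = g ⁻¹' W ij := fun ij => by rw [← hOW]; rfl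
  let diag : Fin (n + m + 1) → Type := fun k =>
    {ij : Fin (n + 1) × Fin (m + 1) // (ij.1 : ℕ) + ij.2 = k}
  refine ⟨fun k => ⋃ ij : diag k, O ij, fun k => isOpen_iUnion fun ij => hOo ij, ?_, fun k => ?_⟩
  · rintro _ ⟨b, rfl⟩
    obtain ⟨ij, hij⟩ := Set.mem_iUnion.mp (hWc.ge (Set.mem_univ (g b)))
    have hk : (ij.1 : ℕ) + ij.2 < n + m + 1 := by omega
    refine Set.mem_iUnion.mpr ⟨⟨_, hk⟩, Set.mem_iUnion.mpr ⟨⟨ij, rfl⟩, ?_⟩⟩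
    rwa [← Set.mem_preimage, hfO]
  · rw [Set.preimage_iUnion]
    refine hasSectionOn_iUnion (fun ij => (hOo _).preimage f.continuous) ?_ fun ij => ?_
    · intro ij ab hne
      rw [hfO, hfO]
      exact (hWd _ _ (ij.2.trans ab.2.symm) (Subtype.coe_injective.ne hne)).preimage g
    · rw [hfO]
      exact hasSectionOn_fibrewiseProd ((hUs _).mono fun b hb => (hWUV _ hb).1)
        ((hVs _).mono fun b hb => (hWUV _ hb).2)

end Secat

/-- Product inequality, II: For `p : E → B`, `p' : E' → B` over the same base
and `f : B → C` with `f(B)` normal in the subspace topology: (1)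
`max{secat_f[p], secat_f[p']} ≤ secat_f[p ×_B p'] ≤ secat_f[p] + secat_f[p']`; and (2) if
`p'` admits a global continuous section then `secat_f[p ×_B p'] = secat_f[p]`. -/
theorem secatf_fibrewiseProd {E E' B C : Type*} [TopologicalSpace E] [TopologicalSpace E']
    [TopologicalSpace B] [TopologicalSpace C]
    (p : C(E, B)) (p' : C(E', B)) (f : C(B, C))
    [NormalSpace (Set.range f : Set C)] :
    (max (secatf p f) (secatf p' f) ≤ secatf (fibrewiseProd p p') f ∧
      secatf (fibrewiseProd p p') f ≤ secatf p f + secatf p' f) ∧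
    ((∃ s : C(B, E'), ∀ b, p' (s b) = b) → secatf (fibrewiseProd p p') f = secatf p f) := by
  have fst_le : secatf p f ≤ secatf (fibrewiseProd p p') f :=
    secatf_le_of_comp f ⟨fun q => q.1.1, by fun_prop⟩ fun _ => rfl
  have snd_le : secatf p' f ≤ secatf (fibrewiseProd p p') f :=
    secatf_le_of_comp f ⟨fun q => q.1.2, by fun_prop⟩ fun q => q.2.symm
  refine ⟨⟨max_le fst_le snd_le, secatf_le_add fun _ _ => secatCover_fibrewiseProd⟩, ?_⟩
  rintro ⟨s, hs⟩
  refine le_antisymm ?_ fst_le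
  exact secatf_le_of_comp f ⟨fun e => ⟨(e, s (p e)), (hs _).symm⟩, by fun_prop⟩ fun _ => rfl
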